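/- Degree computation from the Poincaré formula: if classes in homology satisfy (g−d)! [W̃_d] = [Θ]^{g−d} for all 0 ≤ d ≤ g, and intersection degrees satisfy deg([Θ]^g) computed via the top cap product equals g! · deg[W̃_0] = g!, then deg([W̃_d] · [W̃_{g−d}]) = binomial(g, d). Concretely, in the model ring: the intersection product of Σ_{|I|=d} ∧_I c ⊗ ∧_I v with Σ_{|J|=g−d} ∧_J c ⊗ ∧_J v (defined via Poincaré duality and cap product) has degree binomial(g, d) against the fundamental class. -/

import Mathlib

/-!
Pairing a wedge of dual basis vectors `∧_S c^*` with a wedge of basis vectors `∧_J c` of the same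
length gives `0` unless `S = J`, and the sign `(-1)^(|S| choose 2)` if `S = J`. In the cap product
of `∧_{Iᶜ} c^* ⊗ ∧_{Iᶜ} v^*` with `Σ_J ∧_J c ⊗ ∧_J v` only `J = Iᶜ` survives, and there the same
sign appears in both tensor factors, so each of the `choose g d` sets `I` contributes `1 ⊗ 1`.
-/

open ExteriorAlgebra TensorProduct

/-- The wedge `∧_{k ∈ I} c k` (indices in increasing order) in the exterior algebra. -/
noncomputable def wedgeSet {g : ℕ} {L : Type*} [AddCommGroup L] [Module ℤ L]
    (c : Fin g → L) (I : Finset (Fin g)) : ExteriorAlgebra ℤ L :=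
  ((I.sort (· ≤ ·)).map fun k => ExteriorAlgebra.ι ℤ (c k)).prod

/-- The interior product, extended to an algebra homomorphism
`∧(L^*) → End(∧L)`, via the universal property of the exterior algebra. -/
noncomputable def interiorProd (L : Type*) [AddCommGroup L] [Module ℤ L] :
    ExteriorAlgebra ℤ (Module.Dual ℤ L) →ₐ[ℤ] Module.End ℤ (ExteriorAlgebra ℤ L) :=
  ExteriorAlgebra.lift ℤ
    ⟨CliffordAlgebra.contractLeft (Q := (0 : QuadraticForm ℤ L)),
      fun d => LinearMap.ext fun x => CliffordAlgebra.contractLeft_contractLeft d x⟩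

/-- The cap product `((α⊗β) ⌢ (x⊗y)) = (α ⌟ x) ⊗ (β ⌟ y)` on `(∧L^* ⊗ ∧M^*) × (∧L ⊗ ∧M)`. -/
noncomputable def cap {L M : Type*} [AddCommGroup L] [Module ℤ L]
    [AddCommGroup M] [Module ℤ M]
    (T : ExteriorAlgebra ℤ (Module.Dual ℤ L) ⊗[ℤ] ExteriorAlgebra ℤ (Module.Dual ℤ M))
    (z : ExteriorAlgebra ℤ L ⊗[ℤ] ExteriorAlgebra ℤ M) :
    ExteriorAlgebra ℤ L ⊗[ℤ] ExteriorAlgebra ℤ M :=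
  TensorProduct.homTensorHomMap (RingHom.id ℤ) _ _ _ _
    ((Algebra.TensorProduct.map (interiorProd L) (interiorProd M)) T) z

section Contraction

variable (R : Type*) {M ι : Type*} [CommRing R] [AddCommGroup M] [Module R M]

noncomputable def wedgeList (c : ι → M) (t : List ι) : ExteriorAlgebra R M :=
  (t.map fun k => ExteriorAlgebra.ι R (c k)).prod

variable {R}

lemma wedgeList_cons (c : ι → M) (k : ι) (t : List ι) :
    wedgeList R c (k :: t) = ExteriorAlgebra.ι R (c k) * wedgeList R c t := by
  simp [wedgeList]

variable (b : Module.Basis ι R M)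

noncomputable def contractList (s : List ι) : Module.End R (ExteriorAlgebra R M) :=
  (s.map fun j => CliffordAlgebra.contractLeft (Q := (0 : QuadraticForm R M)) (b.coord j)).prod

lemma contractList_append_singleton (s : List ι) (j : ι) :
    contractList b (s ++ [j]) =
      contractList b s *
        CliffordAlgebra.contractLeft (Q := (0 : QuadraticForm R M)) (b.coord j) := by
  simp [contractList]

variable [DecidableEq ι]

lemma contractLeft_coord_wedgeList (j : ι) {t : List ι} (ht : t.Nodup) :
    CliffordAlgebra.contractLeft (Q := (0 : QuadraticForm R M)) (b.coord j) (wedgeList R b t)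
      = if j ∈ t then (-1 : R) ^ t.idxOf j • wedgeList R b (t.erase j) else 0 := by
  induction t with
  | nil => simp [wedgeList, CliffordAlgebra.contractLeft_one]
  | cons k t ih =>
    obtain ⟨hkt, ht⟩ := List.nodup_cons.mp ht
    rw [wedgeList_cons, CliffordAlgebra.contractLeft_ι_mul, ih ht]
    rcases eq_or_ne k j with rfl | hkj
    · simp [hkt]
    · by_cases hjt : j ∈ t
      · simp [hkj, hkj.symm, hjt, List.idxOf_cons_ne, wedgeList_cons, pow_succ]
      · simp [hkj.symm, hjt]

lemma contractList_wedgeList_of_toFinset_ne {s t : List ι} (ht : t.Nodup)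
    (hlen : s.length = t.length) (hne : s.toFinset ≠ t.toFinset) :
    contractList b s (wedgeList R b t) = 0 := by
  induction s using List.reverseRecOn generalizing t with
  | nil => exact absurd (by rw [List.length_eq_zero_iff.mp hlen.symm]) hne
  | append_singleton s j ih =>
    rw [contractList_append_singleton, Module.End.mul_apply, contractLeft_coord_wedgeList b j ht]
    split_ifs with hjt
    · rw [map_smul, ih (ht.erase j), smul_zero]
      · simp [List.length_erase_of_mem hjt] at hlen ⊢; omega
      · contrapose! hne
        ext x
        have hx := congrArg (x ∈ ·) hne
        simp only [List.mem_toFinset, ht.mem_erase_iff, eq_iff_iff] at hx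
        simp only [List.toFinset_append, Finset.mem_union, List.mem_toFinset, hx]
        grind
    · exact map_zero _

lemma contractList_wedgeList_self {s : List ι} (hs : s.Nodup) :
    contractList b s (wedgeList R b s) = (-1 : R) ^ s.length.choose 2 • 1 := by
  induction s using List.reverseRecOn with
  | nil => simp [contractList, wedgeList]
  | append_singleton s j ih =>
    have hjs : j ∉ s := fun h => List.disjoint_of_nodup_append hs h (List.mem_singleton_self j)
    rw [contractList_append_singleton, Module.End.mul_apply, contractLeft_coord_wedgeList b j hs,
      if_pos (by simp), List.idxOf_append_of_notMem hjs, List.erase_append_right _ hjs,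
      List.erase_cons_head, List.append_nil, map_smul, ih (List.nodup_append.mp hs).1, smul_smul,
      ← pow_add]
    simp [Nat.choose_succ_succ']

end Contraction

section Integral

variable {L M : Type*} [AddCommGroup L] [Module ℤ L] [AddCommGroup M] [Module ℤ M]

lemma cap_sum_tmul {ι κ : Type*} (s : Finset ι) (t : Finset κ)
    (α : ι → ExteriorAlgebra ℤ (Module.Dual ℤ L)) (β : ι → ExteriorAlgebra ℤ (Module.Dual ℤ M))
    (x : κ → ExteriorAlgebra ℤ L) (y : κ → ExteriorAlgebra ℤ M) :
    cap (∑ i ∈ s, α i ⊗ₜ[ℤ] β i) (∑ j ∈ t, x j ⊗ₜ[ℤ] y j)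
      = ∑ i ∈ s, ∑ j ∈ t, interiorProd L (α i) (x j) ⊗ₜ[ℤ] interiorProd M (β i) (y j) := by
  simp only [cap, map_sum, LinearMap.sum_apply, Algebra.TensorProduct.map_tmul,
    TensorProduct.homTensorHomMap_apply, TensorProduct.map_tmul]
  exact Finset.sum_comm

variable {g : ℕ} (c : Module.Basis (Fin g) ℤ L)

lemma interiorProd_wedgeList_coord (s : List (Fin g)) :
    interiorProd L (wedgeList ℤ (fun k => c.coord k) s) = contractList c s := by
  rw [wedgeList, map_list_prod, List.map_map, contractList]
  exact congrArg List.prod (List.map_congr_left fun j _ => ExteriorAlgebra.lift_ι_apply _ _ _ _)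

lemma interiorProd_wedgeSet_coord_wedgeSet {S J : Finset (Fin g)} (hcard : S.card = J.card) :
    interiorProd L (wedgeSet (fun k => c.coord k) S) (wedgeSet c J)
      = if S = J then (-1 : ℤ) ^ S.card.choose 2 • 1 else 0 := by
  change interiorProd L (wedgeList ℤ _ _) (wedgeList ℤ _ _) = _
  rw [interiorProd_wedgeList_coord]
  split_ifs with hSJ
  · subst hSJ
    -- `interiorProd` uses the `ℤ`-module structure of an additive group, `contractList` the
    -- algebra one: they agree only up to unfolding, so the lemma is not usable by `rw`.
    have hself := contractList_wedgeList_self c (Finset.sort_nodup S (· ≤ ·))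
    rwa [Finset.length_sort] at hself
  · exact contractList_wedgeList_of_toFinset_ne c (Finset.sort_nodup _ _)
      (by rw [Finset.length_sort, Finset.length_sort, hcard])
      (by rwa [Finset.sort_toFinset, Finset.sort_toFinset])

lemma sum_interiorProd_wedgeSet_tmul (v : Module.Basis (Fin g) ℤ M) (S : Finset (Fin g)) :
    ∑ J ∈ Finset.powersetCard S.card Finset.univ,
        interiorProd L (wedgeSet (fun k => c.coord k) S) (wedgeSet c J) ⊗ₜ[ℤ]
          interiorProd M (wedgeSet (fun k => v.coord k) S) (wedgeSet v J)
      = 1 ⊗ₜ[ℤ] 1 := by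
  rw [Finset.sum_eq_single_of_mem S (Finset.mem_powersetCard_univ.mpr rfl)]
  · rw [interiorProd_wedgeSet_coord_wedgeSet c rfl, interiorProd_wedgeSet_coord_wedgeSet v rfl,
      if_pos rfl, if_pos rfl, TensorProduct.smul_tmul_smul, ← pow_add, ← two_mul, pow_mul,
      neg_one_sq, one_pow, one_smul]
  · intro J hJ hJS
    rw [interiorProd_wedgeSet_coord_wedgeSet c (Finset.mem_powersetCard_univ.mp hJ).symm,
      if_neg (Ne.symm hJS), TensorProduct.zero_tmul]

end Integral

theorem degree_Wd_dot_Wgd_general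
    (g d : ℕ)
    (L M : Type*) [AddCommGroup L] [Module ℤ L] [AddCommGroup M] [Module ℤ M]
    (c : Module.Basis (Fin g) ℤ L) (v : Module.Basis (Fin g) ℤ M) :
    cap (∑ I ∈ Finset.powersetCard d (Finset.univ : Finset (Fin g)),
          wedgeSet (fun k => c.coord k) Iᶜ ⊗ₜ[ℤ] wedgeSet (fun k => v.coord k) Iᶜ)
        (∑ J ∈ Finset.powersetCard (g - d) (Finset.univ : Finset (Fin g)),
          wedgeSet c J ⊗ₜ[ℤ] wedgeSet v J)
      = (Nat.choose g d : ℤ) •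
          ((1 : ExteriorAlgebra ℤ L) ⊗ₜ[ℤ] (1 : ExteriorAlgebra ℤ M)) := by
  rw [cap_sum_tmul]
  calc _ = ∑ _I ∈ Finset.powersetCard d (Finset.univ : Finset (Fin g)),
        (1 : ExteriorAlgebra ℤ L) ⊗ₜ[ℤ] (1 : ExteriorAlgebra ℤ M) := by
        refine Finset.sum_congr rfl fun I hI => ?_
        have hcard : Iᶜ.card = g - d := by
          rw [Finset.card_compl, Fintype.card_fin, Finset.mem_powersetCard_univ.mp hI]
        rw [← hcard, sum_interiorProd_wedgeSet_tmul]
    _ = _ := by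
        rw [Finset.sum_const, Finset.card_powersetCard, Finset.card_univ, Fintype.card_fin,
          natCast_zsmul]

/-- degree computation from the Poincaré formula, model version: the
intersection product of `Σ_{|I|=d} ∧_I c ⊗ ∧_I v` with `Σ_{|J|=g−d} ∧_J c ⊗ ∧_J v`,
computed by capping the Poincaré duals `∧_{k∉I} c_k^* ⊗ ∧_{k∉I} v_k^*` against the
second class, has degree `binomial(g, d)`: in degree `(0,0) ≅ ℤ` it equals
`C(g,d) · (1 ⊗ 1)`. -/
theorem degree_Wd_dot_Wgd
    (g d : ℕ) (hd : d ≤ g)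
    (L M : Type*) [AddCommGroup L] [Module ℤ L] [AddCommGroup M] [Module ℤ M]
    (c : Module.Basis (Fin g) ℤ L) (v : Module.Basis (Fin g) ℤ M) :
    cap (∑ I ∈ Finset.powersetCard d (Finset.univ : Finset (Fin g)),
          wedgeSet (fun k => c.coord k) Iᶜ ⊗ₜ[ℤ] wedgeSet (fun k => v.coord k) Iᶜ)
        (∑ J ∈ Finset.powersetCard (g - d) (Finset.univ : Finset (Fin g)),
          wedgeSet c J ⊗ₜ[ℤ] wedgeSet v J)
      = (Nat.choose g d : ℤ) •
          ((1 : ExteriorAlgebra ℤ L) ⊗ₜ[ℤ] (1 : ExteriorAlgebra ℤ M)) :=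
  degree_Wd_dot_Wgd_general g d L M c v
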